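/- arXiv:2211.06039 — 7 statements merged into one kernel-verified Lean document; each statement's English description precedes it below -/
import Mathlib

section
/- Let p ≥ 1, let L : ℝ^p → ℝ be convex and differentiable, let β* ∈ ℝ^p with support S = {i : β*_i ≠ 0}, and let λ > 0 satisfy λ ≥ 2‖∇L(β*)‖_∞. If β̂ is a global minimizer of β ↦ L(β) + λ‖β‖₁ over ℝ^p, then β̂ − β* lies in the restricted cone C_S, i.e. ‖(β̂ − β*)_{S^c}‖₁ ≤ 3‖(β̂ − β*)_S‖₁. -/
open RealInnerProductSpace

/-- The ℓ1-norm on `ℝ^p`. -/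
noncomputable def norm1 {p : ℕ} (ξ : EuclideanSpace ℝ (Fin p)) : ℝ := ∑ i, |ξ i|

/-- The sup-norm (ℓ∞-norm) on `ℝ^p`. -/
noncomputable def normInf {p : ℕ} (ξ : EuclideanSpace ℝ (Fin p)) : ℝ := ⨆ i, |ξ i|

open Classical in
/-- `restrict S ξ` agrees with `ξ` on coordinates in `S` and is zero outside `S`. -/
noncomputable def restrict {p : ℕ} (S : Set (Fin p)) (ξ : EuclideanSpace ℝ (Fin p)) :
    EuclideanSpace ℝ (Fin p) := WithLp.toLp 2 (fun i => if i ∈ S then ξ i else 0)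

/-- First-order condition for convex differentiable functions. -/
lemma grad_lower {p : ℕ} (L : EuclideanSpace ℝ (Fin p) → ℝ)
    (hLconv : ConvexOn ℝ Set.univ L) (hLdiff : Differentiable ℝ L)
    (x y : EuclideanSpace ℝ (Fin p)) :
    ⟪gradient L x, y - x⟫ ≤ L y - L x := by
  set v := y - x with hv
  have hline : HasDerivAt (fun t : ℝ => x + t • v) v 0 := by
    simpa using ((hasDerivAt_id (0 : ℝ)).smul_const v).const_add x
  have hg : HasDerivAt (fun t : ℝ => L (x + t • v)) (fderiv ℝ L x v) 0 := by
    have h0 : HasFDerivAt L (fderiv ℝ L x) (x + (0 : ℝ) • v) := by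
      simpa using (hLdiff x).hasFDerivAt
    exact h0.comp_hasDerivAt 0 hline
  have hfd : fderiv ℝ L x v = ⟪gradient L x, v⟫ := by
    have : fderiv ℝ L x =
        InnerProductSpace.toDual ℝ (EuclideanSpace ℝ (Fin p)) (gradient L x) := by
      simp [gradient]
    rw [this, InnerProductSpace.toDual_apply_apply]
  -- slope bound on (0,1]
  have hslope : ∀ t : ℝ, t ∈ Set.Ioo (0 : ℝ) 1 →
      slope (fun t : ℝ => L (x + t • v)) 0 t ≤ L y - L x := by
    intro t ht
    have hconvpt : L ((1 - t) • x + t • y) ≤ (1 - t) * L x + t * L y :=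
      hLconv.2 (Set.mem_univ x) (Set.mem_univ y) (by linarith [ht.1, ht.2])
        (le_of_lt ht.1) (by ring)
    have hpt : x + t • v = (1 - t) • x + t • y := by
      rw [hv]; module
    have h1 : L (x + t • v) - L x ≤ t * (L y - L x) := by
      rw [hpt]; nlinarith [hconvpt]
    have : slope (fun t : ℝ => L (x + t • v)) 0 t
        = (L (x + t • v) - L (x + (0:ℝ) • v)) / t := by
      simp [slope_def_field]
    rw [this]
    simp only [zero_smul, add_zero]
    rw [div_le_iff₀ ht.1]
    nlinarith [h1]
  have htend : Filter.Tendsto (slope (fun t : ℝ => L (x + t • v)) 0)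
      (nhdsWithin 0 (Set.Ioi 0)) (nhds (fderiv ℝ L x v)) := by
    have := hasDerivAt_iff_tendsto_slope.mp hg
    exact this.mono_left (nhdsWithin_mono _ (fun t ht => ne_of_gt ht))
  have hle : fderiv ℝ L x v ≤ L y - L x := by
    refine le_of_tendsto htend ?_
    filter_upwards [Ioo_mem_nhdsGT_of_mem (by norm_num : (0:ℝ) ∈ Set.Ico (0:ℝ) 1)]
      with t ht using hslope t ht
  rwa [hfd] at hle

lemma inner_abs_le {p : ℕ} (g ν : EuclideanSpace ℝ (Fin p)) :
    |⟪g, ν⟫| ≤ normInf g * norm1 ν := by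
  have h1 : ⟪g, ν⟫ = ∑ i, g i * ν i := by
    simp [PiLp.inner_apply, RCLike.inner_apply, mul_comm]
  rw [h1]
  calc |∑ i, g i * ν i| ≤ ∑ i, |g i * ν i| := Finset.abs_sum_le_sum_abs _ _
    _ ≤ ∑ i, normInf g * |ν i| := by
        refine Finset.sum_le_sum fun i _ => ?_
        rw [abs_mul]
        have hle : |g i| ≤ normInf g := by
          rw [normInf]
          exact le_ciSup (Set.Finite.bddAbove (Set.finite_range fun j => |g j|)) i
        exact mul_le_mul_of_nonneg_right hle (abs_nonneg _)
    _ = normInf g * norm1 ν := by rw [norm1, Finset.mul_sum]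

theorem stmt_0 {p : ℕ} (hp : 1 ≤ p)
    (L : EuclideanSpace ℝ (Fin p) → ℝ)
    (hLconv : ConvexOn ℝ Set.univ L) (hLdiff : Differentiable ℝ L)
    (βstar : EuclideanSpace ℝ (Fin p))
    (S : Set (Fin p)) (hS : S = {i | βstar i ≠ 0})
    (lam : ℝ) (hlam : 0 < lam)
    (hlam2 : 2 * normInf (gradient L βstar) ≤ lam)
    (βhat : EuclideanSpace ℝ (Fin p))
    (hmin : ∀ β, L βhat + lam * norm1 βhat ≤ L β + lam * norm1 β) :
    norm1 (restrict Sᶜ (βhat - βstar)) ≤ 3 * norm1 (restrict S (βhat - βstar)) := by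
  classical
  set ν := βhat - βstar with hν
  set a := norm1 (restrict S ν) with ha
  set b := norm1 (restrict Sᶜ ν) with hb
  have hν_apply : ∀ i, ν i = βhat i - βstar i := fun i => rfl
  -- decomposition of l1 norms
  have hsplit : norm1 ν = a + b := by
    rw [ha, hb, norm1, norm1, norm1, ← Finset.sum_add_distrib]
    refine Finset.sum_congr rfl fun i _ => ?_
    by_cases h : i ∈ S <;> simp [restrict, h]
  -- key l1 inequality
  have hl1 : norm1 βstar - norm1 βhat ≤ a - b := by
    rw [ha, hb, norm1, norm1, norm1, norm1, ← Finset.sum_sub_distrib,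
      ← Finset.sum_sub_distrib]
    refine Finset.sum_le_sum fun i _ => ?_
    by_cases h : i ∈ S
    · have e1 : restrict S ν i = ν i := by simp [restrict, h]
      have e2 : restrict Sᶜ ν i = 0 := by simp [restrict, h]
      rw [e1, e2, abs_zero, sub_zero]
      have h1 := abs_sub_abs_le_abs_sub (βstar i) (βhat i)
      have habs : |βstar i - βhat i| = |ν i| := by
        rw [hν_apply, abs_sub_comm]
      linarith [habs ▸ h1]
    · have hzero : βstar i = 0 := by
        by_contra hne
        exact h (hS ▸ hne)
      have e1 : restrict S ν i = 0 := by simp [restrict, h]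
      have e2 : restrict Sᶜ ν i = ν i := by simp [restrict, h]
      rw [e1, e2, abs_zero, hzero, hν_apply, hzero]
      simp
  -- gradient inequality
  have hgrad : ⟪gradient L βstar, ν⟫ ≤ L βhat - L βstar :=
    grad_lower L hLconv hLdiff βstar βhat
  have hinner : |⟪gradient L βstar, ν⟫| ≤ normInf (gradient L βstar) * norm1 ν :=
    inner_abs_le _ _
  -- optimality
  have hopt : L βhat + lam * norm1 βhat ≤ L βstar + lam * norm1 βstar := hmin βstar
  -- combine
  have hNnonneg : 0 ≤ norm1 ν := Finset.sum_nonneg fun i _ => abs_nonneg _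
  have hgn : normInf (gradient L βstar) * norm1 ν ≤ (lam / 2) * norm1 ν := by
    apply mul_le_mul_of_nonneg_right _ hNnonneg
    linarith
  have hkey : lam * (b - a) ≤ (lam / 2) * (a + b) := by
    have h1 : lam * (norm1 βhat - norm1 βstar) ≤ L βstar - L βhat := by linarith
    have h2 : L βstar - L βhat ≤ -⟪gradient L βstar, ν⟫ := by linarith
    have h3 : -⟪gradient L βstar, ν⟫ ≤ |⟪gradient L βstar, ν⟫| := neg_le_abs _
    have h4 : b - a ≤ norm1 βhat - norm1 βstar := by linarith
    have h5 : lam * (b - a) ≤ lam * (norm1 βhat - norm1 βstar) :=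
      mul_le_mul_of_nonneg_left h4 (le_of_lt hlam)
    calc lam * (b - a) ≤ |⟪gradient L βstar, ν⟫| := by linarith
      _ ≤ (lam / 2) * norm1 ν := le_trans hinner hgn
      _ = (lam / 2) * (a + b) := by rw [hsplit]
  nlinarith [hkey, hlam]
end

section
/- Let p ≥ 1, let L : ℝ^p → ℝ be convex and differentiable, let β* ∈ ℝ^p with support S = {i : β*_i ≠ 0}, and let λ > 0 satisfy λ > ‖∇L(β*)‖_∞. If β̂ is a global minimizer of β ↦ L(β) + λ‖β‖₁ over ℝ^p, then ‖β̂ − β*‖₁ ≤ (2λ / (λ − ‖∇L(β*)‖_∞)) · ‖(β̂ − β*)_S‖₁. -/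
open RealInnerProductSpace

/-- Gradient inequality for convex differentiable functions. -/
lemma grad_ineq {p : ℕ} (L : EuclideanSpace ℝ (Fin p) → ℝ)
    (hc : ConvexOn ℝ Set.univ L) (hd : Differentiable ℝ L)
    (x y : EuclideanSpace ℝ (Fin p)) :
    ⟪gradient L x, y - x⟫ ≤ L y - L x := by
  have hinner : ⟪gradient L x, y - x⟫ = fderiv ℝ L x (y - x) := by
    rw [gradient]; exact InnerProductSpace.toDual_symm_apply
  rw [hinner]
  rcases eq_or_ne x y with rfl | hxy
  · simp
  set g : ℝ → ℝ := fun t => L (AffineMap.lineMap x y t) with hg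
  have hgconv : ConvexOn ℝ Set.univ g := by
    have := hc.comp_affineMap (AffineMap.lineMap x y : ℝ →ᵃ[ℝ] EuclideanSpace ℝ (Fin p))
    rw [Set.preimage_univ] at this; exact this
  have hline : HasDerivAt (fun t : ℝ => AffineMap.lineMap x y t) (y - x) 0 := by
    have : HasDerivAt (fun t : ℝ => t • (y - x) + x) (y - x) 0 := by
      simpa using ((hasDerivAt_id (0:ℝ)).smul_const (y - x)).add_const x
    simpa [AffineMap.lineMap_apply, one_smul] using this
  have hgd : HasDerivAt g (fderiv ℝ L x (y - x)) 0 := by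
    have h0 : (AffineMap.lineMap x y : ℝ →ᵃ[ℝ] _) 0 = x := by
      simp [AffineMap.lineMap_apply]
    have := (hd (AffineMap.lineMap x y (0:ℝ))).hasFDerivAt.comp_hasDerivAt 0 hline
    rw [h0] at this
    exact this
  have hslope := hgconv.le_slope_of_hasDerivAt (Set.mem_univ (0:ℝ)) (Set.mem_univ (1:ℝ))
    one_pos hgd
  have h1 : g 1 = L y := by simp [hg, AffineMap.lineMap_apply]
  have h0 : g 0 = L x := by simp [hg, AffineMap.lineMap_apply]
  rw [slope_def_field, h1, h0] at hslope
  simpa using hslope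

theorem stmt_1 {p : ℕ} (hp : 1 ≤ p)
    (L : EuclideanSpace ℝ (Fin p) → ℝ)
    (hLconv : ConvexOn ℝ Set.univ L) (hLdiff : Differentiable ℝ L)
    (βstar : EuclideanSpace ℝ (Fin p))
    (S : Set (Fin p)) (hS : S = {i | βstar i ≠ 0})
    (lam : ℝ) (hlam : 0 < lam)
    (hlam2 : normInf (gradient L βstar) < lam)
    (βhat : EuclideanSpace ℝ (Fin p))
    (hmin : ∀ β, L βhat + lam * norm1 βhat ≤ L β + lam * norm1 β) :
    norm1 (βhat - βstar) ≤
      (2 * lam / (lam - normInf (gradient L βstar))) * norm1 (restrict S (βhat - βstar)) := by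
  classical
  haveI : Nonempty (Fin p) := ⟨⟨0, hp⟩⟩
  set g := gradient L βstar with hgdef
  set m := normInf g with hm
  set ν := βhat - βstar with hν
  set a := norm1 (restrict S ν) with ha
  set b := norm1 (restrict Sᶜ ν) with hb
  have hbdd : BddAbove (Set.range fun i => |g i|) := (Set.finite_range _).bddAbove
  have habs : ∀ i, |g i| ≤ m := fun i => le_ciSup hbdd i
  have hm0 : 0 ≤ m := le_trans (abs_nonneg _) (habs (Classical.arbitrary _))
  -- inner product bound
  have hip : |⟪g, ν⟫| ≤ m * norm1 ν := by
    have : ⟪g, ν⟫ = ∑ i, g i * ν i := by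
      simp [PiLp.inner_apply, RCLike.inner_apply, mul_comm]
    rw [this, norm1, Finset.mul_sum]
    refine (Finset.abs_sum_le_sum_abs _ _).trans (Finset.sum_le_sum fun i _ => ?_)
    rw [abs_mul]
    exact mul_le_mul_of_nonneg_right (habs i) (abs_nonneg _)
  -- convexity inequality
  have hconv : ⟪g, ν⟫ ≤ L βhat - L βstar := by
    have := grad_ineq L hLconv hLdiff βstar βhat
    exact this
  -- minimality
  have hmin' := hmin βstar
  -- norm decompositions
  have hdecomp : norm1 ν = a + b := by
    rw [ha, hb, norm1, norm1, norm1, ← Finset.sum_add_distrib]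
    refine Finset.sum_congr rfl fun i _ => ?_
    by_cases hi : i ∈ S <;> simp [restrict, hi]
  have hlower : norm1 βstar + b - a ≤ norm1 βhat := by
    rw [ha, hb]
    simp only [norm1]
    rw [← Finset.sum_add_distrib, ← Finset.sum_sub_distrib]
    refine Finset.sum_le_sum fun i _ => ?_
    have hνi : ν i = βhat i - βstar i := rfl
    by_cases hi : i ∈ S
    · have hic : i ∉ Sᶜ := by simpa using hi
      simp only [restrict, PiLp.toLp_apply, if_pos hi, if_neg hic, abs_zero]
      have h1 : |βstar i| ≤ |βhat i| + |ν i| := by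
        have h2 := abs_add_le (βhat i) (-(ν i))
        simp only [abs_neg] at h2
        have he : βstar i = βhat i + -(ν i) := by rw [hνi]; ring
        rw [he]; exact h2
      linarith
    · have hz : βstar i = 0 := by
        by_contra h
        exact hi (hS ▸ h)
      have hic : i ∈ Sᶜ := hi
      simp only [restrict, PiLp.toLp_apply, if_neg hi, if_pos hic]
      rw [hz, hνi, hz]
      simp
  -- combine
  have hkey : (lam - m) * b ≤ (lam + m) * a := by
    have h1 : lam * norm1 βhat ≤ lam * norm1 βstar + m * norm1 ν := by
      nlinarith [neg_abs_le (⟪g, ν⟫ : ℝ), hip, hconv, hmin']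
    rw [hdecomp] at h1
    have h2 := mul_le_mul_of_nonneg_left hlower (le_of_lt hlam)
    nlinarith [h2, h1]
  have hlm : 0 < lam - m := by rw [hm, hgdef]; linarith
  have ha0 : 0 ≤ a := Finset.sum_nonneg fun i _ => abs_nonneg _
  rw [hdecomp]
  rw [div_mul_eq_mul_div, le_div_iff₀ hlm]
  nlinarith [hkey, ha0, hm0]
end

section
/- Let p ≥ 1, let L : ℝ^p → ℝ be convex and differentiable, let β* ∈ ℝ^p with support S = {i : β*_i ≠ 0} of cardinality s = |S| ≥ 1, suppose L satisfies the RSC condition at β* over C_S with parameter κ > 0, and let λ > 0 satisfy λ ≥ 2‖∇L(β*)‖_∞. If β̂ is a global minimizer of β ↦ L(β) + λ‖β‖₁ over ℝ^p, then ‖β̂ − β*‖₁ ≤ (16 s / κ)(λ + ‖∇L(β*)‖_∞) ≤ 24 s λ / κ. -/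
open RealInnerProductSpace

/-- `f` satisfies the restricted strong convexity (RSC) condition at `βstar` over the
restricted cone `C_S` with parameter `κ`. -/
def RSC {p : ℕ} (f : EuclideanSpace ℝ (Fin p) → ℝ) (βstar : EuclideanSpace ℝ (Fin p))
    (S : Set (Fin p)) (κ : ℝ) : Prop :=
  ∀ Δ : EuclideanSpace ℝ (Fin p), norm1 (restrict Sᶜ Δ) ≤ 3 * norm1 (restrict S Δ) →
    κ * ‖Δ‖ ^ 2 ≤ f (βstar + Δ) - f βstar - ⟪Δ, gradient f βstar⟫

lemma norm1_nonneg {p : ℕ} (ξ : EuclideanSpace ℝ (Fin p)) : 0 ≤ norm1 ξ :=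
  Finset.sum_nonneg fun _ _ => abs_nonneg _

lemma norm1_split {p : ℕ} (S : Set (Fin p)) (ξ : EuclideanSpace ℝ (Fin p)) :
    norm1 ξ = norm1 (restrict S ξ) + norm1 (restrict Sᶜ ξ) := by
  unfold norm1 restrict
  rw [← Finset.sum_add_distrib]
  refine Finset.sum_congr rfl fun i _ => ?_
  by_cases h : i ∈ S <;> simp [h]

open Classical in
lemma norm1_restrict_eq {p : ℕ} (S : Set (Fin p)) (ξ : EuclideanSpace ℝ (Fin p)) :
    norm1 (restrict S ξ) = ∑ i, if i ∈ S then |ξ i| else 0 := by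
  unfold norm1 restrict
  exact Finset.sum_congr rfl fun i _ => by by_cases h : i ∈ S <;> simp [h]

lemma normInf_le_iff {p : ℕ} (g : EuclideanSpace ℝ (Fin p)) (i : Fin p) :
    |g i| ≤ normInf g :=
  le_ciSup (f := fun j => |g j|) (Set.Finite.bddAbove (Set.finite_range _)) i

lemma normInf_nonneg {p : ℕ} (hp : 1 ≤ p) (g : EuclideanSpace ℝ (Fin p)) :
    0 ≤ normInf g := by
  have : Nonempty (Fin p) := Fin.pos_iff_nonempty.mp hp
  exact le_trans (abs_nonneg _) (normInf_le_iff g (Classical.arbitrary _))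

lemma abs_inner_le_norm1 {p : ℕ} (x y : EuclideanSpace ℝ (Fin p)) :
    |⟪x, y⟫| ≤ norm1 x * normInf y := by
  have hin : ⟪x, y⟫ = ∑ i, x i * y i := by
    simp [PiLp.inner_apply, RCLike.inner_apply, conj_trivial, mul_comm]
  rw [hin]
  calc |∑ i, x i * y i| ≤ ∑ i, |x i * y i| := Finset.abs_sum_le_sum_abs _ _
    _ ≤ ∑ i, |x i| * normInf y := by
        refine Finset.sum_le_sum fun i _ => ?_
        rw [abs_mul]
        exact mul_le_mul_of_nonneg_left (normInf_le_iff y i) (abs_nonneg _)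
    _ = norm1 x * normInf y := by rw [norm1, ← Finset.sum_mul]

open Classical in
lemma norm1_restrict_le_sqrt {p : ℕ} (S : Set (Fin p)) (ξ : EuclideanSpace ℝ (Fin p)) :
    norm1 (restrict S ξ) ≤ Real.sqrt S.ncard * ‖ξ‖ := by
  classical
  set T : Finset (Fin p) := S.toFinset with hT
  have hTcard : (T.card : ℝ) = (S.ncard : ℝ) := by
    rw [hT, Set.ncard_eq_toFinset_card' S]
  have h1 : norm1 (restrict S ξ) = ∑ i ∈ T, |ξ i| := by
    unfold norm1 restrict
    rw [← Finset.sum_filter_add_sum_filter_not Finset.univ (fun i => i ∈ S)]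
    have h2 : ∑ i ∈ Finset.univ.filter (fun i => ¬ i ∈ S), |if i ∈ S then ξ i else 0| = 0 := by
      refine Finset.sum_eq_zero fun i hi => ?_
      simp only [Finset.mem_filter] at hi
      simp [hi.2]
    rw [h2, add_zero]
    refine Finset.sum_congr ?_ fun i hi => ?_
    · ext i; simp [hT]
    · have hiS : i ∈ S := by simpa [hT] using hi
      simp [hiS]
  rw [h1]
  have hsq : (∑ i ∈ T, |ξ i|) ^ 2 ≤ (T.card : ℝ) * ∑ i ∈ T, |ξ i| ^ 2 :=
    sq_sum_le_card_mul_sum_sq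
  have hle : ∑ i ∈ T, |ξ i| ^ 2 ≤ ‖ξ‖ ^ 2 := by
    have : ‖ξ‖ ^ 2 = ∑ i, |ξ i| ^ 2 := by
      rw [EuclideanSpace.norm_eq, Real.sq_sqrt (by positivity)]
      simp [Real.norm_eq_abs]
    rw [this]
    exact Finset.sum_le_sum_of_subset_of_nonneg (Finset.subset_univ T)
      (fun i _ _ => by positivity)
  have hnn : (0:ℝ) ≤ ∑ i ∈ T, |ξ i| := Finset.sum_nonneg fun i _ => abs_nonneg _
  calc ∑ i ∈ T, |ξ i| = Real.sqrt ((∑ i ∈ T, |ξ i|) ^ 2) := (Real.sqrt_sq hnn).symm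
    _ ≤ Real.sqrt ((S.ncard : ℝ) * ‖ξ‖ ^ 2) := by
        apply Real.sqrt_le_sqrt
        calc (∑ i ∈ T, |ξ i|) ^ 2 ≤ (T.card : ℝ) * ∑ i ∈ T, |ξ i| ^ 2 := hsq
          _ ≤ (S.ncard : ℝ) * ‖ξ‖ ^ 2 := by
              rw [hTcard]
              exact mul_le_mul_of_nonneg_left hle (by positivity)
    _ = Real.sqrt (S.ncard : ℝ) * ‖ξ‖ := by
        rw [Real.sqrt_mul (by positivity), Real.sqrt_sq (norm_nonneg _)]

lemma convex_grad_ineq {p : ℕ} (L : EuclideanSpace ℝ (Fin p) → ℝ)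
    (hconv : ConvexOn ℝ Set.univ L) (hdiff : Differentiable ℝ L)
    (x v : EuclideanSpace ℝ (Fin p)) :
    L x + ⟪v, gradient L x⟫ ≤ L (x + v) := by
  set φ : ℝ → ℝ := fun t => L (x + t • v) with hφ
  have hA : ∀ t : ℝ, HasDerivAt (fun t : ℝ => x + t • v) v t := by
    intro t
    simpa using ((hasDerivAt_id t).smul_const v).const_add x
  have hg : HasGradientAt L (gradient L x) x := (hdiff x).hasGradientAt
  have hGF : HasFDerivAt L ((InnerProductSpace.toDual ℝ _) (gradient L x)) x :=
    hasGradientAt_iff_hasFDerivAt.mp hg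
  have hφ0 : HasDerivAt φ ⟪gradient L x, v⟫ 0 := by
    have hGF' : HasFDerivAt L ((InnerProductSpace.toDual ℝ _) (gradient L x))
        (x + (0:ℝ) • v) := by simpa using hGF
    have := hGF'.comp_hasDerivAt 0 (hA 0)
    simpa [φ, Function.comp_def, InnerProductSpace.toDual_apply_apply] using this
  have hφconv : ConvexOn ℝ Set.univ φ := by
    have := hconv.comp_affineMap (AffineMap.lineMap (x : EuclideanSpace ℝ (Fin p)) (x + v))
    have heq : (L ∘ (AffineMap.lineMap x (x + v))) = φ := by
      funext t
      simp [AffineMap.lineMap_apply, hφ, add_comm]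
    rw [heq] at this
    simpa using this
  have hslope := hφconv.le_slope_of_hasDerivAt (Set.mem_univ (0:ℝ)) (Set.mem_univ (1:ℝ))
    one_pos hφ0
  rw [slope_def_field] at hslope
  have h1 : φ 1 = L (x + v) := by simp [hφ]
  have h0 : φ 0 = L x := by simp [hφ]
  rw [real_inner_comm]
  simp only [h1, h0] at hslope
  have heq : (L (x+v) - L x) / (1 - 0) = L (x+v) - L x := by norm_num
  rw [heq] at hslope
  linarith

lemma key_aux {κ r lam G q a : ℝ} (hlam : 0 < lam) (hG0 : 0 ≤ G)
    (hq0 : 0 ≤ q) (hr0 : 0 ≤ r) (hCS : a ≤ q * r)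
    (hub : κ * r ^ 2 ≤ lam * a + 4 * a * G) : κ * r ≤ 4 * (lam + G) * q := by
  rcases eq_or_lt_of_le hr0 with h | h
  · rw [← h, mul_zero]
    exact mul_nonneg (by linarith : (0:ℝ) ≤ 4 * (lam + G)) hq0
  · have h1 : κ * r * r ≤ (4 * (lam + G) * q) * r := by
      have hm : (lam + 4 * G) * a ≤ (lam + 4 * G) * (q * r) :=
        mul_le_mul_of_nonneg_left hCS (by linarith)
      have hqr : 0 ≤ lam * (q * r) := mul_nonneg hlam.le (mul_nonneg hq0 hr0)
      nlinarith [hm, hqr, hub]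
    exact le_of_mul_le_mul_right (by nlinarith [h1]) h

lemma first_aux {κ lam G q r a b sR : ℝ} (hκ : 0 < κ) (hq0 : 0 ≤ q)
    (hb3a : b ≤ 3 * a) (hCS : a ≤ q * r) (key : κ * r ≤ 4 * (lam + G) * q)
    (hqq : q * q = sR) : a + b ≤ 16 * sR / κ * (lam + G) := by
  rw [div_mul_eq_mul_div, le_div_iff₀ hκ]
  have m1 : b * κ ≤ 3 * a * κ := mul_le_mul_of_nonneg_right hb3a hκ.le
  have m2 : a * κ ≤ q * r * κ := mul_le_mul_of_nonneg_right hCS hκ.le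
  have m3 : 4 * q * (κ * r) ≤ 4 * q * (4 * (lam + G) * q) :=
    mul_le_mul_of_nonneg_left key (by positivity)
  have m4 : 16 * (q * q) * (lam + G) = 16 * sR * (lam + G) := by rw [hqq]
  linarith [m1, m2, m3, m4]

lemma second_aux {κ lam G sR : ℝ} (hκ : 0 < κ) (hGhalf : G ≤ lam / 2)
    (hsR : 0 ≤ sR) : 16 * sR / κ * (lam + G) ≤ 24 * sR * lam / κ := by
  rw [div_mul_eq_mul_div, div_le_div_iff₀ hκ hκ]
  have m5 : (lam + G) * (sR * κ) ≤ (3 / 2 * lam) * (sR * κ) :=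
    mul_le_mul_of_nonneg_right (by linarith) (mul_nonneg hsR hκ.le)
  linarith [m5]

theorem stmt_3 {p : ℕ} (hp : 1 ≤ p)
    (L : EuclideanSpace ℝ (Fin p) → ℝ)
    (hLconv : ConvexOn ℝ Set.univ L) (hLdiff : Differentiable ℝ L)
    (βstar : EuclideanSpace ℝ (Fin p))
    (S : Set (Fin p)) (hS : S = {i | βstar i ≠ 0})
    (s : ℕ) (hcard : S.ncard = s) (hs : 1 ≤ s)
    (κ : ℝ) (hκ : 0 < κ) (hRSC : RSC L βstar S κ)
    (lam : ℝ) (hlam : 0 < lam)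
    (hlam2 : 2 * normInf (gradient L βstar) ≤ lam)
    (βhat : EuclideanSpace ℝ (Fin p))
    (hmin : ∀ β, L βhat + lam * norm1 βhat ≤ L β + lam * norm1 β) :
    norm1 (βhat - βstar) ≤ (16 * s / κ) * (lam + normInf (gradient L βstar)) ∧
      (16 * s / κ) * (lam + normInf (gradient L βstar)) ≤ 24 * s * lam / κ := by
  classical
  set g : EuclideanSpace ℝ (Fin p) := gradient L βstar with hg
  set G : ℝ := normInf g with hGdef
  have hG0 : 0 ≤ G := normInf_nonneg hp g
  have hGhalf : G ≤ lam / 2 := by linarith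
  set Δ : EuclideanSpace ℝ (Fin p) := βhat - βstar with hΔ
  have hβ : βstar + Δ = βhat := by rw [hΔ]; abel
  set a : ℝ := norm1 (restrict S Δ) with ha
  set b : ℝ := norm1 (restrict Sᶜ Δ) with hb
  have ha0 : 0 ≤ a := norm1_nonneg _
  have hb0 : 0 ≤ b := norm1_nonneg _
  have hsplit : norm1 Δ = a + b := norm1_split S Δ
  set I : ℝ := ⟪Δ, g⟫ with hI
  have hinner : |I| ≤ (a + b) * G := by
    have := abs_inner_le_norm1 Δ g
    rwa [hsplit] at this
  have hI1 : -((a + b) * G) ≤ I := neg_le_of_abs_le hinner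
  have hI2 : I ≤ (a + b) * G := le_of_abs_le hinner
  have hconv1 : L βstar + I ≤ L βhat := by
    have := convex_grad_ineq L hLconv hLdiff βstar Δ
    rwa [hβ, ← hg] at this
  have hminβ := hmin βstar
  -- coordinatewise ℓ1 comparison
  have haeq : a = ∑ i, if i ∈ S then |Δ i| else 0 := by
    rw [ha]; unfold norm1 restrict
    exact Finset.sum_congr rfl fun i _ => by by_cases h : i ∈ S <;> simp [h]
  have hbeq : b = ∑ i, if i ∈ S then 0 else |Δ i| := by
    rw [hb]; unfold norm1 restrict
    exact Finset.sum_congr rfl fun i _ => by by_cases h : i ∈ S <;> simp [h]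
  have hns : norm1 βstar - norm1 βhat ≤ a - b := by
    have hkey : ∀ i, |βstar i| - |βhat i| ≤
        (if i ∈ S then |Δ i| else 0) - (if i ∈ S then 0 else |Δ i|) := by
      intro i
      have hΔi : Δ i = βhat i - βstar i := rfl
      by_cases h : i ∈ S
      · rw [if_pos h, if_pos h, sub_zero]
        calc |βstar i| - |βhat i| ≤ |βstar i - βhat i| := abs_sub_abs_le_abs_sub _ _
          _ = |Δ i| := by rw [hΔi, abs_sub_comm]
      · have h0 : βstar i = 0 := by
          by_contra hne
          exact h (hS ▸ hne)
        rw [if_neg h, if_neg h, zero_sub, h0, hΔi, h0, sub_zero, abs_zero, zero_sub]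
    calc norm1 βstar - norm1 βhat = ∑ i, (|βstar i| - |βhat i|) := by
          rw [norm1, norm1, Finset.sum_sub_distrib]
      _ ≤ ∑ i, ((if i ∈ S then |Δ i| else 0) - (if i ∈ S then 0 else |Δ i|)) :=
          Finset.sum_le_sum fun i _ => hkey i
      _ = a - b := by rw [haeq, hbeq, Finset.sum_sub_distrib]
  -- cone condition
  have hb3a : b ≤ 3 * a := by
    have k1 : lam * (b - a) ≤ lam * (norm1 βhat - norm1 βstar) :=
      mul_le_mul_of_nonneg_left (by linarith) hlam.le
    have k2 : (a + b) * G ≤ (a + b) * (lam / 2) :=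
      mul_le_mul_of_nonneg_left hGhalf (by linarith)
    have hfin : lam * b ≤ lam * (3 * a) := by linarith [hminβ, hconv1, hI1, k1, k2]
    exact (mul_le_mul_iff_right₀ hlam).mp hfin
  have hR := hRSC Δ (by rw [← hb, ← ha]; exact hb3a)
  rw [hβ, ← hI] at hR
  -- bounding κ‖Δ‖²
  have hub : κ * ‖Δ‖ ^ 2 ≤ lam * a + 4 * a * G := by
    have k3 : lam * (norm1 βstar - norm1 βhat) ≤ lam * (a - b) :=
      mul_le_mul_of_nonneg_left hns hlam.le
    have k4 : (a + b) * G ≤ 4 * a * G :=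
      mul_le_mul_of_nonneg_right (by linarith) hG0
    have k5 : L βhat - L βstar ≤ lam * (a - b) := by linarith [hminβ, k3]
    have k6 : lam * (a - b) ≤ lam * a := by nlinarith [mul_nonneg hlam.le hb0]
    linarith [hR, hI1, k4, k5, k6]
  clear_value g G Δ a b I
  set q : ℝ := Real.sqrt s with hq
  have hq0 : 0 ≤ q := Real.sqrt_nonneg _
  have hqq : q * q = (s : ℝ) := Real.mul_self_sqrt (by positivity)
  have hCS : a ≤ q * ‖Δ‖ := by
    have := norm1_restrict_le_sqrt S Δ
    rwa [hcard, ← ha, ← hq] at this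
  set r : ℝ := ‖Δ‖ with hr
  have hr0 : 0 ≤ r := norm_nonneg _
  clear_value q r
  have key : κ * r ≤ 4 * (lam + G) * q := key_aux hlam hG0 hq0 hr0 hCS hub
  refine ⟨?_, second_aux hκ hGhalf (by positivity)⟩
  rw [hsplit]
  exact first_aux hκ hq0 hb3a hCS key hqq
end

section
/- Let p, t₀, t ≥ 1, let x_{01}, …, x_{0 t₀} ∈ ℝ^p and x_1, …, x_t ∈ ℝ^p, y_{01}, …, y_{0 t₀} ∈ ℝ and y_1, …, y_t ∈ ℝ, and let w_1, …, w_t > 0 with W = Σ_{j=1}^t w_j. Define ℓ_j(β) = ½ (y_j − ⟨x_j, β⟩)², ℓ₀(β) = (1/(2 t₀)) Σ_{i=1}^{t₀} (y_{0i} − ⟨x_{0i}, β⟩)², and, for a fixed β̃ ∈ ℝ^p, L(β) = ℓ₀(β) − ⟨∇ℓ₀(β̃), β⟩ + ⟨Σ_{j=1}^t (w_j / W) ∇ℓ_j(β̃), β⟩. Let Λ̂_t = Σ_{j=1}^t (w_j / W) x_j x_j⊤ and Λ̂₀ = (1/t₀) Σ_{i=1}^{t₀} x_{0i} x_{0i}⊤.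 Then for every β* ∈ ℝ^p and every p × p real matrix Λ: ‖∇L(β*)‖_∞ ≤ ‖Σ_{j=1}^t (w_j / W) ∇ℓ_j(β*)‖_∞ + 2(‖Λ̂_t − Λ‖_max + ‖Λ̂₀ − Λ‖_max) · ‖β̃ − β*‖₁. -/
open RealInnerProductSpace

variable {p : ℕ}

lemma grad_sq (v : EuclideanSpace ℝ (Fin p)) (c : ℝ) (β : EuclideanSpace ℝ (Fin p)) :
    HasGradientAt (fun β => (1/2 : ℝ) * (c - ⟪v, β⟫) ^ 2) ((⟪v, β⟫ - c) • v) β := by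
  rw [hasGradientAt_iff_hasFDerivAt]
  have h1 : HasFDerivAt (fun β : EuclideanSpace ℝ (Fin p) => c - ⟪v, β⟫)
      ((0 : _ →L[ℝ] ℝ) - innerSL ℝ v) β :=
    (hasFDerivAt_const c β).sub (innerSL ℝ v).hasFDerivAt
  have h2 := (h1.mul h1).const_mul (1/2 : ℝ)
  have h3 : HasFDerivAt (fun β : EuclideanSpace ℝ (Fin p) => (1/2 : ℝ) * (c - ⟪v, β⟫) ^ 2)
      ((1/2 : ℝ) • ((c - ⟪v, β⟫) • ((0 : _ →L[ℝ] ℝ) - innerSL ℝ v)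
        + (c - ⟪v, β⟫) • ((0 : _ →L[ℝ] ℝ) - innerSL ℝ v))) β := by
    simpa [pow_two] using h2
  refine h3.congr_fderiv ?_
  ext h
  simp [inner_smul_left, inner_sub_left]
  ring

lemma grad_inner (c β : EuclideanSpace ℝ (Fin p)) :
    HasGradientAt (fun β => ⟪c, β⟫) c β := by
  rw [hasGradientAt_iff_hasFDerivAt]
  exact (innerSL ℝ c).hasFDerivAt

lemma HGA.const_smul' {f : EuclideanSpace ℝ (Fin p) → ℝ} {f' x : EuclideanSpace ℝ (Fin p)}
    (c : ℝ) (h : HasGradientAt f f' x) :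
    HasGradientAt (fun y => c * f y) (c • f') x := by
  rw [hasGradientAt_iff_hasFDerivAt] at *
  rw [map_smul]
  exact h.const_mul c

lemma HGA.add' {f g : EuclideanSpace ℝ (Fin p) → ℝ} {f' g' x : EuclideanSpace ℝ (Fin p)}
    (hf : HasGradientAt f f' x) (hg : HasGradientAt g g' x) :
    HasGradientAt (fun y => f y + g y) (f' + g') x := by
  rw [hasGradientAt_iff_hasFDerivAt] at *
  rw [map_add]
  exact hf.add hg

lemma HGA.sum' {n : ℕ} {f : Fin n → EuclideanSpace ℝ (Fin p) → ℝ}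
    {f' : Fin n → EuclideanSpace ℝ (Fin p)} {x : EuclideanSpace ℝ (Fin p)}
    (h : ∀ i, HasGradientAt (f i) (f' i) x) :
    HasGradientAt (fun y => ∑ i, f i y) (∑ i, f' i) x := by
  rw [hasGradientAt_iff_hasFDerivAt, map_sum]
  exact HasFDerivAt.fun_sum fun i _ => h i

lemma eucl_sum_apply {ι : Type*} (s : Finset ι) (f : ι → EuclideanSpace ℝ (Fin p)) (a : Fin p) :
    (∑ i ∈ s, f i) a = ∑ i ∈ s, f i a :=
  by simp [WithLp.ofLp_sum]

/-- The max-norm of a `p × p` matrix: the maximum absolute value of its entries. -/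
noncomputable def matMax {p : ℕ} (A : Matrix (Fin p) (Fin p) ℝ) : ℝ := ⨆ a, ⨆ b, |A a b|

theorem stmt_7 {p t₀ t : ℕ} (hp : 1 ≤ p) (ht₀ : 1 ≤ t₀) (ht : 1 ≤ t)
    (x0 : Fin t₀ → EuclideanSpace ℝ (Fin p)) (y0 : Fin t₀ → ℝ)
    (x : Fin t → EuclideanSpace ℝ (Fin p)) (y : Fin t → ℝ)
    (w : Fin t → ℝ) (hw : ∀ j, 0 < w j)
    (W : ℝ) (hW : W = ∑ j, w j)
    (ℓ : Fin t → EuclideanSpace ℝ (Fin p) → ℝ)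
    (hℓ : ∀ j β, ℓ j β = (1 / 2) * (y j - ⟪x j, β⟫) ^ 2)
    (ℓ0 : EuclideanSpace ℝ (Fin p) → ℝ)
    (hℓ0 : ∀ β, ℓ0 β = (1 / (2 * (t₀ : ℝ))) * ∑ i, (y0 i - ⟪x0 i, β⟫) ^ 2)
    (βtil : EuclideanSpace ℝ (Fin p))
    (L : EuclideanSpace ℝ (Fin p) → ℝ)
    (hL : ∀ β, L β = ℓ0 β - ⟪gradient ℓ0 βtil, β⟫ +
      ⟪∑ j, (w j / W) • gradient (ℓ j) βtil, β⟫)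
    (Λt Λ0 : Matrix (Fin p) (Fin p) ℝ)
    (hΛt : Λt = ∑ j, (w j / W) • Matrix.of (fun a b => x j a * x j b))
    (hΛ0 : Λ0 = ((1 : ℝ) / (t₀ : ℝ)) • ∑ i, Matrix.of (fun a b => x0 i a * x0 i b))
    (βstar : EuclideanSpace ℝ (Fin p))
    (Λ : Matrix (Fin p) (Fin p) ℝ) :
    normInf (gradient L βstar) ≤
      normInf (∑ j, (w j / W) • gradient (ℓ j) βstar) +
        2 * (matMax (Λt - Λ) + matMax (Λ0 - Λ)) * norm1 (βtil - βstar) := by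
  haveI : NeZero p := ⟨by omega⟩
  -- gradient of ℓ j
  have hGj : ∀ j β, HasGradientAt (ℓ j) ((⟪x j, β⟫ - y j) • x j) β := by
    intro j β
    have : ℓ j = fun β => (1/2 : ℝ) * (y j - ⟪x j, β⟫) ^ 2 := funext fun β => hℓ j β
    rw [this]
    exact grad_sq (x j) (y j) β
  have hgj : ∀ j β, gradient (ℓ j) β = (⟪x j, β⟫ - y j) • x j := fun j β => (hGj j β).gradient
  -- gradient of ℓ0
  set G0 : EuclideanSpace ℝ (Fin p) → EuclideanSpace ℝ (Fin p) :=
    fun β => (1 / (t₀ : ℝ)) • ∑ i, (⟪x0 i, β⟫ - y0 i) • x0 i with hG0def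
  have hG0 : ∀ β, HasGradientAt ℓ0 (G0 β) β := by
    intro β
    have h1 := HGA.const_smul' (1 / (t₀ : ℝ))
      (HGA.sum' (fun i => grad_sq (x0 i) (y0 i) β))
    have : ℓ0 = fun β => (1 / (t₀ : ℝ)) * ∑ i, (1/2 : ℝ) * (y0 i - ⟪x0 i, β⟫) ^ 2 := by
      funext β
      rw [hℓ0, Finset.mul_sum, Finset.mul_sum]
      refine Finset.sum_congr rfl fun i _ => by ring
    rw [this]
    exact h1
  have hg0 : ∀ β, gradient ℓ0 β = G0 β := fun β => (hG0 β).gradient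
  -- gradient of L
  set cvec : EuclideanSpace ℝ (Fin p) :=
    (∑ j, (w j / W) • gradient (ℓ j) βtil) - gradient ℓ0 βtil with hcvec
  have hLfun : L = fun β => ℓ0 β + ⟪cvec, β⟫ := by
    funext β
    rw [hL, hcvec, inner_sub_left]
    ring
  have hgL : gradient L βstar = G0 βstar + cvec := by
    rw [hLfun]
    exact (HGA.add' (hG0 βstar) (grad_inner cvec βstar)).gradient
  -- coordinatewise identity
  set S : EuclideanSpace ℝ (Fin p) := ∑ j, (w j / W) • gradient (ℓ j) βstar with hS
  set δ : EuclideanSpace ℝ (Fin p) := βtil - βstar with hδ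
  have key : ∀ a, gradient L βstar a = S a + ∑ b, (Λt - Λ0) a b * δ b := by
    intro a
    rw [hgL, hcvec, hS, hδ, hg0, hΛt, hΛ0]
    simp only [hgj, hG0def]
    simp only [PiLp.add_apply, PiLp.sub_apply, PiLp.smul_apply, eucl_sum_apply,
      Matrix.sub_apply, Matrix.sum_apply, Matrix.smul_apply, Matrix.of_apply,
      PiLp.inner_apply, RCLike.inner_apply, starRingEnd_apply, star_trivial,
      smul_eq_mul]
    rw [Finset.mul_sum, Finset.mul_sum]
    have hA : (∑ i : Fin t₀, 1/(t₀:ℝ) * ((∑ b, x0 i b * βstar b - y0 i) * x0 i a))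
        - (∑ i : Fin t₀, 1/(t₀:ℝ) * ((∑ b, x0 i b * βtil b - y0 i) * x0 i a))
        = - ∑ b, (1/(t₀:ℝ) * ∑ i, x0 i a * x0 i b) * (βtil b - βstar b) := by
      rw [← Finset.sum_sub_distrib]
      have e2 : (- ∑ b, (1/(t₀:ℝ) * ∑ i, x0 i a * x0 i b) * (βtil b - βstar b))
          = ∑ b : Fin p, ∑ i : Fin t₀, 1/(t₀:ℝ) * (x0 i b * (βstar b - βtil b) * x0 i a) := by
        rw [← Finset.sum_neg_distrib]
        refine Finset.sum_congr rfl fun b _ => ?_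
        rw [Finset.mul_sum, Finset.sum_mul, ← Finset.sum_neg_distrib]
        exact Finset.sum_congr rfl fun i _ => by ring
      rw [e2, Finset.sum_comm]
      refine Finset.sum_congr rfl fun i _ => ?_
      rw [← mul_sub, ← sub_mul, sub_sub_sub_cancel_right, ← Finset.sum_sub_distrib,
        Finset.sum_mul, Finset.mul_sum]
      exact Finset.sum_congr rfl fun b _ => by ring
    have hB : (∑ j : Fin t, w j / W * ((∑ b, x j b * βtil b - y j) * x j a))
        - (∑ j : Fin t, w j / W * ((∑ b, x j b * βstar b - y j) * x j a))
        = ∑ b, (∑ j, w j / W * (x j a * x j b)) * (βtil b - βstar b) := by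
      rw [← Finset.sum_sub_distrib]
      have e2 : (∑ b, (∑ j, w j / W * (x j a * x j b)) * (βtil b - βstar b))
          = ∑ b : Fin p, ∑ j : Fin t, w j / W * (x j b * (βtil b - βstar b) * x j a) := by
        refine Finset.sum_congr rfl fun b _ => ?_
        rw [Finset.sum_mul]
        exact Finset.sum_congr rfl fun j _ => by ring
      rw [e2, Finset.sum_comm]
      refine Finset.sum_congr rfl fun j _ => ?_
      rw [← mul_sub, ← sub_mul, sub_sub_sub_cancel_right, ← Finset.sum_sub_distrib,
        Finset.sum_mul, Finset.mul_sum]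
      exact Finset.sum_congr rfl fun b _ => by ring
    have e3 : ∑ b : Fin p, (∑ j, w j / W * (x j a * x j b)
          - 1/(t₀:ℝ) * ∑ i, x0 i a * x0 i b) * (βtil b - βstar b)
        = (∑ b, (∑ j, w j / W * (x j a * x j b)) * (βtil b - βstar b))
          - ∑ b, (1/(t₀:ℝ) * ∑ i, x0 i a * x0 i b) * (βtil b - βstar b) := by
      rw [← Finset.sum_sub_distrib]
      exact Finset.sum_congr rfl fun b _ => sub_mul _ _ _
    rw [e3]
    simp only [mul_comm (βstar.ofLp _), mul_comm (βtil.ofLp _)]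
    linarith [hA, hB]
  -- final bound
  have hnep : Nonempty (Fin p) := ⟨⟨0, hp⟩⟩
  have bdd : ∀ (f : Fin p → ℝ), BddAbove (Set.range f) :=
    fun f => Set.Finite.bddAbove (Set.finite_range f)
  have habove : ∀ (A : Matrix (Fin p) (Fin p) ℝ) (a b : Fin p), |A a b| ≤ matMax A :=
    fun A a b => le_trans (le_ciSup (bdd fun b => |A a b|) b)
      (le_ciSup (bdd fun a => ⨆ b, |A a b|) a)
  have hM1nn : 0 ≤ matMax (Λt - Λ) :=
    le_trans (abs_nonneg _) (habove _ ⟨0, hp⟩ ⟨0, hp⟩)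
  have hM2nn : 0 ≤ matMax (Λ0 - Λ) :=
    le_trans (abs_nonneg _) (habove _ ⟨0, hp⟩ ⟨0, hp⟩)
  have hn1nn : 0 ≤ norm1 δ := Finset.sum_nonneg fun i _ => abs_nonneg _
  have hent : ∀ a b : Fin p, |(Λt - Λ0) a b| ≤ matMax (Λt - Λ) + matMax (Λ0 - Λ) := by
    intro a b
    have h : (Λt - Λ0) a b = (Λt - Λ) a b - (Λ0 - Λ) a b := by
      simp [Matrix.sub_apply]
    rw [h]
    exact (abs_sub _ _).trans (add_le_add (habove _ a b) (habove _ a b))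
  refine ciSup_le fun a => ?_
  rw [key a]
  have h1 : |S a| ≤ normInf S := le_ciSup (bdd fun a => |S a|) a
  have h2 : |∑ b, (Λt - Λ0) a b * δ b| ≤
      (matMax (Λt - Λ) + matMax (Λ0 - Λ)) * norm1 δ := by
    calc |∑ b, (Λt - Λ0) a b * δ b| ≤ ∑ b, |(Λt - Λ0) a b * δ b| :=
          Finset.abs_sum_le_sum_abs _ _
      _ ≤ ∑ b, (matMax (Λt - Λ) + matMax (Λ0 - Λ)) * |δ b| := by
          refine Finset.sum_le_sum fun b _ => ?_
          rw [abs_mul]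
          exact mul_le_mul_of_nonneg_right (hent a b) (abs_nonneg _)
      _ = (matMax (Λt - Λ) + matMax (Λ0 - Λ)) * norm1 δ := by
          rw [norm1, Finset.mul_sum]
  calc |S a + ∑ b, (Λt - Λ0) a b * δ b| ≤ |S a| + |∑ b, (Λt - Λ0) a b * δ b| :=
        abs_add_le _ _
    _ ≤ normInf S + (matMax (Λt - Λ) + matMax (Λ0 - Λ)) * norm1 δ := add_le_add h1 h2
    _ ≤ normInf S + 2 * (matMax (Λt - Λ) + matMax (Λ0 - Λ)) * norm1 δ := by nlinarith
end

section
/- Let 0 < q < 1 and let (z_j)_{j ≥ 1} be a sequence of real numbers with 0 ≤ z_j ≤ 1/√j for all j ≥ 1. Then there exists a constant C > 0 (depending only on q) such that for all integers t ≥ 2: Σ_{j=1}^t q^{t−j} z_j ≤ C (ln t) / √t. -/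
/-!
For `1 ≤ j ≤ t` we have `t ≤ j (t - j + 1)`, so `1 / √j ≤ √(t - j + 1) / √t`. Hence the sum is at
most `t^{-1/2} ∑_{k < t} q^k √(k + 1) ≤ t^{-1/2} ∑_k (k + 1) q^k = t^{-1/2} / (1 - q)^2`, and
`log t ≥ log 2` for `t ≥ 2`.
-/

open Finset Real

theorem Nat.le_mul_sub_add_one {j t : ℕ} (hj : 1 ≤ j) (hjt : j ≤ t) : t ≤ j * (t - j + 1) :=
  calc t = (t - j) + j := by omega
    _ ≤ j * (t - j) + j := by gcongr; exact Nat.le_mul_of_pos_left _ hj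
    _ = j * (t - j + 1) := by ring

theorem one_div_sqrt_le_sqrt_sub_add_one_div_sqrt {j t : ℕ} (hj : 1 ≤ j) (hjt : j ≤ t) :
    1 / √(j : ℝ) ≤ √((t - j : ℕ) + 1 : ℝ) / √(t : ℝ) := by
  have hj₀ : (0 : ℝ) < j := by exact_mod_cast hj
  have ht₀ : (0 : ℝ) < t := by exact_mod_cast hj.trans hjt
  rw [div_le_div_iff₀ (sqrt_pos.mpr hj₀) (sqrt_pos.mpr ht₀), one_mul, mul_comm, ← sqrt_mul hj₀.le]
  exact sqrt_le_sqrt (by exact_mod_cast Nat.le_mul_sub_add_one hj hjt)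

theorem Finset.sum_Icc_one_sub_eq_sum_range {M : Type*} [AddCommMonoid M] (f : ℕ → M) (t : ℕ) :
    ∑ j ∈ Icc 1 t, f (t - j) = ∑ k ∈ range t, f k := by
  refine sum_nbij' (t - ·) (t - ·) ?_ ?_ ?_ ?_ ?_ <;> intro a ha <;>
    simp only [mem_Icc, mem_range] at * <;> omega

theorem sum_range_pow_mul_sqrt_succ_le {q : ℝ} (hq0 : 0 ≤ q) (hq1 : q < 1) (n : ℕ) :
    ∑ k ∈ range n, q ^ k * √((k : ℝ) + 1) ≤ 1 / (1 - q) ^ 2 := by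
  have hasSum : HasSum (fun k : ℕ ↦ q ^ k * ((k : ℝ) + 1)) (1 / (1 - q) ^ 2) := by
    simpa [mul_comm] using hasSum_choose_mul_geometric_of_norm_lt_one 1
      (by rwa [norm_of_nonneg hq0] : ‖q‖ < 1)
  calc ∑ k ∈ range n, q ^ k * √((k : ℝ) + 1)
      ≤ ∑ k ∈ range n, q ^ k * ((k : ℝ) + 1) := by
        gcongr with k
        exact sqrt_le_self_iff.mpr (Or.inr (by linarith [k.cast_nonneg (α := ℝ)]))
    _ ≤ 1 / (1 - q) ^ 2 := sum_le_hasSum _ (fun k _ ↦ by positivity) hasSum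

theorem sum_Icc_pow_sub_mul_le_of_le_one_div_sqrt {q : ℝ} (hq0 : 0 ≤ q) (hq1 : q < 1)
    {z : ℕ → ℝ} (hz : ∀ j : ℕ, 1 ≤ j → z j ≤ 1 / √j) (t : ℕ) :
    ∑ j ∈ Icc 1 t, q ^ (t - j) * z j ≤ 1 / (1 - q) ^ 2 / √t :=
  calc ∑ j ∈ Icc 1 t, q ^ (t - j) * z j
      ≤ ∑ j ∈ Icc 1 t, q ^ (t - j) * √((t - j : ℕ) + 1 : ℝ) / √t := by
        gcongr with j hj
        rw [mem_Icc] at hj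
        rw [mul_div_assoc]
        gcongr
        exact (hz j hj.1).trans (one_div_sqrt_le_sqrt_sub_add_one_div_sqrt hj.1 hj.2)
    _ = (∑ k ∈ range t, q ^ k * √((k : ℝ) + 1)) / √t := by
        rw [← sum_div, sum_Icc_one_sub_eq_sum_range (fun k ↦ q ^ k * √((k : ℝ) + 1))]
    _ ≤ 1 / (1 - q) ^ 2 / √t := by
        gcongr
        exact sum_range_pow_mul_sqrt_succ_le hq0 hq1 t

theorem stmt_12_general (q : ℝ) (hq0 : 0 < q) (hq1 : q < 1)
    (z : ℕ → ℝ)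
    (hz : ∀ j : ℕ, 1 ≤ j → z j ≤ 1 / Real.sqrt j) :
    ∃ C > 0, ∀ t : ℕ, 2 ≤ t →
      ∑ j ∈ Finset.Icc 1 t, q ^ (t - j) * z j ≤ C * Real.log t / Real.sqrt t := by
  have hq : 0 < 1 - q := by linarith
  have hlog2 : 0 < log 2 := log_pos one_lt_two
  refine ⟨1 / (1 - q) ^ 2 / log 2, by positivity, fun t ht ↦ ?_⟩
  have hlogt : log 2 ≤ log t := log_le_log two_pos (by exact_mod_cast ht)
  calc ∑ j ∈ Icc 1 t, q ^ (t - j) * z j ≤ 1 / (1 - q) ^ 2 / √t :=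
        sum_Icc_pow_sub_mul_le_of_le_one_div_sqrt hq0.le hq1 hz t
    _ ≤ 1 / (1 - q) ^ 2 / log 2 * log t / √t := by
        gcongr
        rw [div_mul_eq_mul_div, le_div_iff₀ hlog2]
        gcongr

theorem stmt_12 (q : ℝ) (hq0 : 0 < q) (hq1 : q < 1)
    (z : ℕ → ℝ) (hz0 : ∀ j : ℕ, 1 ≤ j → 0 ≤ z j)
    (hz : ∀ j : ℕ, 1 ≤ j → z j ≤ 1 / Real.sqrt j) :
    ∃ C > 0, ∀ t : ℕ, 2 ≤ t →
      ∑ j ∈ Finset.Icc 1 t, q ^ (t - j) * z j ≤ C * Real.log t / Real.sqrt t :=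
  stmt_12_general q hq0 hq1 z hz
end

section
/- Let 0 < q < 1. Then for every integer t ≥ 1: Σ_{j=1}^t q^{t−j} / √j ≤ q^{t−1} / (2 ln(1/q)) + q^t · ∫_1^{t+1} x^{−1/2} q^{−x} dx. -/
open Real MeasureTheory

noncomputable def Fq (L x : ℝ) : ℝ := x ^ (-(1/2 : ℝ)) * Real.exp (L * x)

lemma Fq_cont (L : ℝ) : ContinuousOn (Fq L) (Set.Ioi (0:ℝ)) := by
  intro x hx
  have h1 : ContinuousAt (fun y : ℝ => y ^ (-(1/2 : ℝ))) x :=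
    Real.continuousAt_rpow_const x _ (Or.inl (ne_of_gt hx))
  have h2 : ContinuousAt (fun y : ℝ => Real.exp (L * y)) x :=
    (Real.continuous_exp.comp (continuous_const.mul continuous_id)).continuousAt
  exact (h1.mul h2).continuousWithinAt

lemma Fq_nonneg (L x : ℝ) (hx : 0 ≤ x) : 0 ≤ Fq L x :=
  mul_nonneg (Real.rpow_nonneg hx _) (Real.exp_nonneg _)

lemma Fq_intble (L a b : ℝ) (ha : 0 < a) (hab : a ≤ b) :
    IntervalIntegrable (Fq L) volume a b := by
  apply ContinuousOn.intervalIntegrable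
  apply (Fq_cont L).mono
  rw [Set.uIcc_of_le hab]
  intro x hx
  exact lt_of_lt_of_le ha hx.1

lemma Fq_deriv (L x : ℝ) (hx : 0 < x) :
    HasDerivAt (Fq L) (x ^ (-(1/2:ℝ) - 1) * Real.exp (L * x) * (L * x - 1/2)) x := by
  have h1 : HasDerivAt (fun y : ℝ => y ^ (-(1/2):ℝ)) (-(1/2) * x ^ ((-(1/2):ℝ) - 1)) x :=
    Real.hasDerivAt_rpow_const (Or.inl (ne_of_gt hx))
  have h2 : HasDerivAt (fun y : ℝ => Real.exp (L * y)) (Real.exp (L * x) * (L * 1)) x :=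
    (Real.hasDerivAt_exp (L * x)).comp x ((hasDerivAt_id x).const_mul L)
  have h3 := h1.mul h2
  have hxp : x ^ (-(1/2):ℝ) = x ^ ((-(1/2):ℝ) - 1) * x := by
    rw [← Real.rpow_add_one (ne_of_gt hx)]
    norm_num
  refine h3.congr_deriv ?_
  rw [hxp]; ring

lemma Fq_mono (L : ℝ) (hL : 0 < L) : MonotoneOn (Fq L) (Set.Ici (1/(2*L))) := by
  have hx0 : (0:ℝ) < 1/(2*L) := by positivity
  apply StrictMonoOn.monotoneOn
  apply strictMonoOn_of_deriv_pos (convex_Ici _)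
  · exact (Fq_cont L).mono fun x hx => lt_of_lt_of_le hx0 hx
  · intro x hx
    rw [interior_Ici] at hx
    have hxpos : 0 < x := lt_trans hx0 hx
    rw [(Fq_deriv L x hxpos).deriv]
    have hx' : 1/(2*L) < x := hx
    have h1 : L * (1/(2*L)) = 1/2 := by field_simp
    have h2 : (0:ℝ) < L * x - 1/2 := by nlinarith [mul_lt_mul_of_pos_left hx' hL]
    have h3 : (0:ℝ) < x ^ (-(1/2:ℝ) - 1) := Real.rpow_pos_of_pos hxpos _
    have h4 : (0:ℝ) < Real.exp (L * x) := Real.exp_pos _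
    exact mul_pos (mul_pos h3 h4) h2

lemma Fq_anti (L : ℝ) (hL : 0 < L) : AntitoneOn (Fq L) (Set.Ioc (0:ℝ) (1/(2*L))) := by
  apply StrictAntiOn.antitoneOn
  apply strictAntiOn_of_deriv_neg (convex_Ioc _ _)
  · exact (Fq_cont L).mono fun x hx => hx.1
  · intro x hx
    rw [interior_Ioc] at hx
    have hxpos : 0 < x := hx.1
    rw [(Fq_deriv L x hxpos).deriv]
    have hx' : x < 1/(2*L) := hx.2
    have h1 : L * (1/(2*L)) = 1/2 := by field_simp
    have h2 : L * x - 1/2 < 0 := by nlinarith [mul_lt_mul_of_pos_left hx' hL]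
    have h3 : (0:ℝ) < x ^ (-(1/2:ℝ) - 1) := Real.rpow_pos_of_pos hxpos _
    have h4 : (0:ℝ) < Real.exp (L * x) := Real.exp_pos _
    exact mul_neg_of_pos_of_neg (mul_pos h3 h4) h2

lemma Fq_min (L : ℝ) (hL : 0 < L) (x : ℝ) (hx : 0 < x) : Fq L (1/(2*L)) ≤ Fq L x := by
  have hx0 : (0:ℝ) < 1/(2*L) := by positivity
  rcases le_total x (1/(2*L)) with h | h
  · exact Fq_anti L hL ⟨hx, h⟩ ⟨hx0, le_refl _⟩ h
  · exact Fq_mono L hL (Set.mem_Ici.mpr (le_refl _)) (Set.mem_Ici.mpr h) h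

lemma Fq_key (L : ℝ) (hL : 0 < L) (u : ℝ) (hu : 1 ≤ u) :
    Fq L u ≤ (∫ x in u..(u+1), Fq L x) +
      (Fq L (min u (1/(2*L))) - Fq L (min (u+1) (1/(2*L)))) := by
  have hu0 : (0:ℝ) < u := lt_of_lt_of_le one_pos hu
  set x0 : ℝ := 1/(2*L) with hx0def
  set m : ℝ := Fq L u - Fq L (min u x0) + Fq L (min (u+1) x0) with hm
  have hlow : ∀ x ∈ Set.Icc u (u+1), m ≤ Fq L x := by
    intro x hx
    have hxpos : (0:ℝ) < x := lt_of_lt_of_le hu0 hx.1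
    rcases le_or_gt x0 u with h | h
    · have h1 : min u x0 = x0 := min_eq_right h
      have h2 : min (u+1) x0 = x0 := min_eq_right (h.trans (by linarith))
      rw [hm, h1, h2]
      have := Fq_mono L hL (Set.mem_Ici.mpr h) (Set.mem_Ici.mpr (h.trans hx.1)) hx.1
      linarith
    · rcases le_or_gt (u+1) x0 with h' | h'
      · have h1 : min u x0 = u := min_eq_left h.le
        have h2 : min (u+1) x0 = u+1 := min_eq_left h'
        rw [hm, h1, h2]
        have := Fq_anti L hL (Set.mem_Ioc.mpr ⟨hxpos, hx.2.trans h'⟩)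
          (Set.mem_Ioc.mpr ⟨by linarith, h'⟩) hx.2
        linarith
      · have h1 : min u x0 = u := min_eq_left h.le
        have h2 : min (u+1) x0 = x0 := min_eq_right h'.le
        rw [hm, h1, h2]
        have := Fq_min L hL x hxpos
        rw [← hx0def] at this
        linarith
  have hint : IntervalIntegrable (Fq L) volume u (u+1) := Fq_intble L u (u+1) hu0 (by linarith)
  have hmono : (∫ _x in u..(u+1), m) ≤ ∫ x in u..(u+1), Fq L x :=
    intervalIntegral.integral_mono_on (by linarith) intervalIntegrable_const hint hlow
  have hconst : (∫ _x in u..(u+1), m) = m := by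
    rw [intervalIntegral.integral_const]
    simp
  rw [hconst] at hmono
  linarith [hmono, hm]

lemma Fq_sum (L : ℝ) (hL : 0 < L) (t : ℕ) (ht : 1 ≤ t) :
    ∑ i ∈ Finset.range t, Fq L (1 + (i:ℝ)) ≤
      Real.exp L / (2*L) + ∫ x in (1:ℝ)..((t:ℝ)+1), Fq L x := by
  set x0 : ℝ := 1/(2*L) with hx0def
  have hx0 : (0:ℝ) < x0 := by positivity
  set a : ℕ → ℝ := fun i => 1 + (i:ℝ) with ha
  have haint : ∀ i, i < t → IntervalIntegrable (Fq L) volume (a i) (a (i+1)) := by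
    intro i _
    apply Fq_intble L
    · simp only [ha]; positivity
    · simp only [ha]; push_cast; linarith
  have hsplit : ∑ i ∈ Finset.range t, (∫ x in (a i)..(a (i+1)), Fq L x)
      = ∫ x in (a 0)..(a t), Fq L x :=
    intervalIntegral.sum_integral_adjacent_intervals haint
  set G : ℝ → ℝ := fun x => Fq L (min x x0) with hG
  have hterm : ∀ i ∈ Finset.range t,
      Fq L (1 + (i:ℝ)) ≤ (∫ x in (a i)..(a (i+1)), Fq L x) + (G (a i) - G (a (i+1))) := by
    intro i _
    have h1 : (1:ℝ) ≤ a i := by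
      simp only [ha]
      have : (0:ℝ) ≤ (i:ℝ) := Nat.cast_nonneg i
      linarith
    have := Fq_key L hL (a i) h1
    have he : a (i+1) = a i + 1 := by simp only [ha]; push_cast; ring
    rw [he]
    simpa only [hG, hx0def] using this
  calc ∑ i ∈ Finset.range t, Fq L (1 + (i:ℝ))
      ≤ ∑ i ∈ Finset.range t, ((∫ x in (a i)..(a (i+1)), Fq L x) + (G (a i) - G (a (i+1)))) :=
        Finset.sum_le_sum hterm
    _ = (∑ i ∈ Finset.range t, (∫ x in (a i)..(a (i+1)), Fq L x))
        + ∑ i ∈ Finset.range t, (G (a i) - G (a (i+1))) := Finset.sum_add_distrib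
    _ = (∫ x in (a 0)..(a t), Fq L x) + (G (a 0) - G (a t)) := by
        rw [hsplit, Finset.sum_range_sub' (fun i => G (a i))]
    _ ≤ Real.exp L / (2*L) + ∫ x in (1:ℝ)..((t:ℝ)+1), Fq L x := by
        have he0 : a 0 = 1 := by simp [ha]
        have het : a t = (t:ℝ) + 1 := by simp only [ha]; ring
        rw [he0, het, add_comm (Real.exp L / (2*L))]
        gcongr ?_ + ?_
        · exact le_refl _
        · -- G 1 - G ((t:ℝ)+1) ≤ exp L / (2*L)
          have htR : (1:ℝ) ≤ (t:ℝ) := by exact_mod_cast ht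
          rcases le_or_gt x0 1 with h | h
          · have h1 : min (1:ℝ) x0 = x0 := min_eq_right h
            have h2 : min ((t:ℝ)+1) x0 = x0 := min_eq_right (by linarith)
            simp only [hG, h1, h2]
            have : (0:ℝ) < Real.exp L / (2*L) := by positivity
            linarith
          · have h1 : min (1:ℝ) x0 = 1 := min_eq_left h.le
            have h2 : 0 ≤ G ((t:ℝ)+1) := Fq_nonneg L _ (le_of_lt (lt_min (by linarith) hx0))
            have h3 : G 1 = Real.exp L := by
              simp only [hG, h1, Fq, Real.one_rpow, one_mul, mul_one]
            have h4 : 2*L ≤ 1 := by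
              rw [hx0def] at h
              by_contra hc
              push_neg at hc
              have : 1/(2*L) < 1 := by
                rw [div_lt_one (by linarith)]; linarith
              linarith
            have h5 : Real.exp L ≤ Real.exp L / (2*L) := by
              rw [le_div_iff₀ (by positivity)]
              nlinarith [Real.exp_pos L]
            linarith

theorem stmt_13 (q : ℝ) (hq0 : 0 < q) (hq1 : q < 1) (t : ℕ) (ht : 1 ≤ t) :
    ∑ j ∈ Finset.Icc 1 t, q ^ (t - j) / Real.sqrt j ≤
      q ^ (t - 1) / (2 * Real.log (1 / q)) +
        q ^ t * ∫ x in (1 : ℝ)..((t : ℝ) + 1), x ^ (-(1 / 2 : ℝ)) * q ^ (-x) := by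
  set L : ℝ := Real.log (1/q) with hLdef
  have hL : 0 < L := Real.log_pos (one_lt_one_div hq0 hq1)
  have hexpL : Real.exp L = q⁻¹ := by
    rw [hLdef, Real.exp_log (by positivity)]
    exact one_div q
  have hqx : ∀ x : ℝ, q ^ (-x) = Real.exp (L * x) := by
    intro x
    rw [Real.rpow_def_of_pos hq0]
    congr 1
    have hlog : L = -Real.log q := by rw [hLdef, one_div, Real.log_inv]
    rw [hlog]; ring
  -- rewrite the integral
  have hIeq : (∫ x in (1:ℝ)..((t:ℝ)+1), x ^ (-(1/2:ℝ)) * q ^ (-x))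
      = ∫ x in (1:ℝ)..((t:ℝ)+1), Fq L x := by
    apply intervalIntegral.integral_congr
    intro x _
    simp only [Fq, hqx]
  -- rewrite the sum
  have hterm : ∀ j ∈ Finset.Icc 1 t, q ^ (t - j) / Real.sqrt j = q ^ t * Fq L j := by
    intro j hj
    obtain ⟨hj1, hj2⟩ := Finset.mem_Icc.mp hj
    have hj0 : (0:ℝ) < (j:ℝ) := by exact_mod_cast Nat.lt_of_lt_of_le Nat.zero_lt_one hj1
    have h2 : ((j:ℝ)) ^ (-(1/2:ℝ)) = (Real.sqrt j)⁻¹ := by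
      rw [Real.rpow_neg hj0.le, Real.sqrt_eq_rpow]
    have h3 : Real.exp (L * (j:ℝ)) = (q ^ j)⁻¹ := by
      rw [mul_comm, Real.exp_nat_mul, hexpL, inv_pow]
    rw [pow_sub₀ q (ne_of_gt hq0) hj2, Fq, h2, h3]
    ring
  rw [Finset.sum_congr rfl hterm, ← Finset.mul_sum, hIeq]
  -- reindex the sum
  have hreindex : ∑ j ∈ Finset.Icc 1 t, Fq L j = ∑ i ∈ Finset.range t, Fq L (1 + (i:ℝ)) := by
    rw [← Finset.Ico_add_one_right_eq_Icc, Finset.sum_Ico_eq_sum_range]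
    apply Finset.sum_congr (by simp)
    intro i _
    push_cast
    ring_nf
  rw [hreindex]
  have hmain := Fq_sum L hL t ht
  have hqt : (0:ℝ) ≤ q ^ t := by positivity
  have hfirst : q ^ (t-1) / (2 * L) = q ^ t * (Real.exp L / (2*L)) := by
    rw [pow_sub₀ q (ne_of_gt hq0) ht, hexpL, pow_one]
    ring
  calc q ^ t * ∑ i ∈ Finset.range t, Fq L (1 + (i:ℝ))
      ≤ q ^ t * (Real.exp L / (2*L) + ∫ x in (1:ℝ)..((t:ℝ)+1), Fq L x) :=
        mul_le_mul_of_nonneg_left hmain hqt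
    _ = q ^ (t-1) / (2 * L) + q ^ t * ∫ x in (1:ℝ)..((t:ℝ)+1), Fq L x := by
        rw [hfirst]; ring
end

section
/- Let 0 < q < 1. Then for every integer t ≥ 3: q^t · ∫_1^{t+1} x^{−1/2} q^{−x} dx ≤ 2 / (q · ln(1/q) · √(t+1)) + q^{t−1} / ln q + q^{3t/4} / (ln(1/q) · q^{1/4}). -/
open Real MeasureTheory Set

private lemma exp_int (c a b : ℝ) (hc : c ≠ 0) :
    ∫ x in a..b, Real.exp (c * x) = (Real.exp (c * b) - Real.exp (c * a)) / c := by
  have h : ∀ x ∈ Set.uIcc a b,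
      HasDerivAt (fun y => Real.exp (c * y) / c) (Real.exp (c * x)) x := by
    intro x _
    have h1 : HasDerivAt (fun y : ℝ => c * y) c x := by
      simpa using (hasDerivAt_id x).const_mul c
    have h2 := h1.exp.div_const c
    rw [mul_div_cancel_right₀ _ hc] at h2
    exact h2
  rw [intervalIntegral.integral_eq_sub_of_hasDerivAt h
    ((Real.continuous_exp.comp (continuous_const.mul continuous_id)).intervalIntegrable a b)]
  ring

theorem stmt_14 (q : ℝ) (hq0 : 0 < q) (hq1 : q < 1) (t : ℕ) (ht : 3 ≤ t) :
    q ^ t * ∫ x in (1 : ℝ)..((t : ℝ) + 1), x ^ (-(1 / 2 : ℝ)) * q ^ (-x) ≤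
      2 / (q * Real.log (1 / q) * Real.sqrt ((t : ℝ) + 1)) +
        q ^ (t - 1) / Real.log q +
        q ^ ((3 * (t : ℝ)) / 4) / (Real.log (1 / q) * q ^ ((1 : ℝ) / 4)) := by
  have hl : Real.log q < 0 := Real.log_neg hq0 hq1
  set c : ℝ := -Real.log q with hc_def
  have hc : 0 < c := by simpa [hc_def] using hl
  have hL : Real.log (1/q) = c := by rw [one_div, Real.log_inv]
  have hT3 : (3:ℝ) ≤ (t:ℝ) := by exact_mod_cast ht
  set T : ℝ := (t:ℝ) + 1 with hT_def
  set a : ℝ := ((t:ℝ)+1)/4 with ha_def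
  have ha1 : 1 ≤ a := by rw [ha_def]; linarith
  have haT : a ≤ T := by rw [ha_def, hT_def]; linarith
  have hTpos : (0:ℝ) < T := by rw [hT_def]; linarith
  have hsT : 0 < Real.sqrt T := Real.sqrt_pos.mpr hTpos
  -- rewrite q ^ (-x) as exp (c * x)
  have hrw : ∀ x : ℝ, q ^ (-x) = Real.exp (c * x) := by
    intro x
    rw [Real.rpow_def_of_pos hq0]
    ring_nf
    congr 1; rw [hc_def]; ring
  simp only [hrw]
  set f : ℝ → ℝ := fun x => x ^ (-(1/2 : ℝ)) * Real.exp (c * x) with hf_def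
  have hfc : ContinuousOn f (Set.Icc 1 T) := by
    apply ContinuousOn.mul
    · intro x hx
      exact (Real.continuousAt_rpow_const x _ (Or.inl (by linarith [hx.1]))).continuousWithinAt
    · exact (Real.continuous_exp.comp (continuous_const.mul continuous_id)).continuousOn
  have hi1 : IntervalIntegrable f volume 1 a :=
    (hfc.mono (by rw [Set.uIcc_of_le ha1]; exact Set.Icc_subset_Icc le_rfl haT)).intervalIntegrable
  have hi2 : IntervalIntegrable f volume a T :=
    (hfc.mono (by rw [Set.uIcc_of_le haT]; exact Set.Icc_subset_Icc ha1 le_rfl)).intervalIntegrable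
  have hsplit : ∫ x in (1:ℝ)..T, f x = (∫ x in (1:ℝ)..a, f x) + ∫ x in a..T, f x :=
    (intervalIntegral.integral_add_adjacent_intervals hi1 hi2).symm
  set C : ℝ := 2 / Real.sqrt T with hC_def
  have hCpos : 0 < C := by positivity
  -- a ^ (-(1/2)) = C
  have haC : a ^ (-(1/2 : ℝ)) = C := by
    have hsa : Real.sqrt a = Real.sqrt T / 2 := by
      rw [show a = (Real.sqrt T / 2)^2 by
        rw [div_pow, Real.sq_sqrt hTpos.le]; rw [ha_def, hT_def]; norm_num]
      exact Real.sqrt_sq (by positivity)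
    rw [Real.rpow_neg (by positivity), ← Real.sqrt_eq_rpow, hsa, hC_def]
    rw [inv_div]
  have hb1 : (∫ x in (1:ℝ)..a, f x) ≤ ∫ x in (1:ℝ)..a, Real.exp (c * x) := by
    apply intervalIntegral.integral_mono_on ha1 hi1
      ((Real.continuous_exp.comp (continuous_const.mul continuous_id)).intervalIntegrable 1 a)
    intro x hx
    have h1 : x ^ (-(1/2 : ℝ)) ≤ 1 :=
      Real.rpow_le_one_of_one_le_of_nonpos hx.1 (by norm_num)
    calc f x ≤ 1 * Real.exp (c * x) :=
          mul_le_mul_of_nonneg_right h1 (Real.exp_pos _).le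
      _ = Real.exp (c * x) := one_mul _
  have hb2 : (∫ x in a..T, f x) ≤ ∫ x in a..T, C * Real.exp (c * x) := by
    apply intervalIntegral.integral_mono_on haT hi2
      ((continuous_const.mul (Real.continuous_exp.comp (continuous_const.mul continuous_id))).intervalIntegrable a T)
    intro x hx
    have h1 : x ^ (-(1/2 : ℝ)) ≤ C := by
      rw [← haC]
      exact Real.rpow_le_rpow_of_nonpos (by linarith) hx.1 (by norm_num)
    exact mul_le_mul_of_nonneg_right h1 (Real.exp_pos _).le
  set E : ℝ := Real.exp (-(t:ℝ)*c) with hE_def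
  set A : ℝ := Real.exp (c*a) with hA_def
  set B : ℝ := Real.exp (c*1) with hB_def
  set D : ℝ := Real.exp (c*T) with hD_def
  have hEpos : 0 < E := Real.exp_pos _
  have hApos : 0 < A := Real.exp_pos _
  have hBpos : 0 < B := Real.exp_pos _
  have hI1 : ∫ x in (1:ℝ)..a, Real.exp (c*x) = (A - B)/c := exp_int c 1 a hc.ne'
  have hI2 : ∫ x in a..T, C * Real.exp (c*x) = C * ((D - A)/c) := by
    rw [intervalIntegral.integral_const_mul, exp_int c a T hc.ne']
  have hQ : q ^ t = E := by
    rw [hE_def, ← Real.rpow_natCast q t, Real.rpow_def_of_pos hq0]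
    congr 1
    rw [hc_def]; ring
  have hq' : q = Real.exp (-c) := by rw [hc_def, neg_neg, Real.exp_log hq0]
  have hED : E * D = B := by
    rw [hE_def, hD_def, hB_def, ← Real.exp_add]
    congr 1
    rw [hT_def]; ring
  have hmul : q ^ t * ∫ x in (1:ℝ)..T, f x ≤ E * ((A - B)/c + C * ((D - A)/c)) := by
    rw [hsplit, hQ]
    apply mul_le_mul_of_nonneg_left _ hEpos.le
    rw [← hI1, ← hI2]
    exact add_le_add hb1 hb2
  refine hmul.trans ?_
  have hR1 : 2 / (q * Real.log (1/q) * Real.sqrt T) = 2*B/(c*Real.sqrt T) := by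
    rw [hL, hq', hB_def, mul_one, Real.exp_neg]
    rw [div_eq_div_iff (by positivity) (by positivity)]
    field_simp
  have hR2 : q ^ (t-1) / Real.log q = -(E*B/c) := by
    have h1 : q ^ (t-1) = E * B := by
      rw [← Real.rpow_natCast q (t-1), Real.rpow_def_of_pos hq0, hE_def, hB_def,
        ← Real.exp_add]
      congr 1
      rw [Nat.cast_sub (by omega : 1 ≤ t), hc_def]
      ring
    rw [h1, show Real.log q = -c by rw [hc_def]; ring, div_neg]
  have hR3 : q ^ ((3*(t:ℝ))/4) / (Real.log (1/q) * q ^ ((1:ℝ)/4)) = E*A/c := by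
    rw [hL, Real.rpow_def_of_pos hq0, Real.rpow_def_of_pos hq0, hE_def, hA_def,
      ← Real.exp_add]
    rw [div_eq_div_iff (by positivity) (by positivity),
      mul_comm c (Real.exp (Real.log q * (1/4))), ← mul_assoc, ← Real.exp_add]
    congr 2
    rw [ha_def, hc_def]
    ring
  rw [hR1, hR2, hR3]
  have key : E * ((A - B)/c + C * ((D - A)/c))
      = 2*B/(c*Real.sqrt T) - E*B/c + E*A/c - 2*(E*A)/(c*Real.sqrt T) := by
    rw [hC_def, ← hED]
    field_simp
    ring
  rw [key]
  have hpos : 0 < 2*(E*A)/(c*Real.sqrt T) := by positivity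
  linarith
end
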